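/- arXiv:math/9809006 — 2 statements merged into one kernel-verified Lean document; each statement's English description precedes it below -/
import Mathlib

section
/- In the algebra A of the quantum supergroup OSp_p(1;2) (relations (35) together with ad − bc + αδ = 1), the element e = 1 + αδ + (p/2)ac satisfies e² = 1 + 2αδ + pac − (p/2)δ². -/
/-- In the quantum supergroup `OSp_p(1;2)` algebra, the element
`e = 1 + αδ + (p/2)ac` satisfies `e² = 1 + 2αδ + pac − (p/2)δ²`. -/
theorem ospq_e_squared
    {A : Type*} [Ring A] [Algebra ℂ A] (p : ℂ) (a b c d α δ : A)
    (hab : a * b - b * a = p • (a * a - 1))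
    (hac : a * c - c * a = -(p • (c * c)))
    (had : a * d - d * a = p • (c * a - c * d))
    (hbc : b * c - c * b = -(p • (c * a + d * c)))
    (hbd : b * d - d * b = p • (1 - d * d))
    (hcd : c * d - d * c = p • (c * c))
    (haα : a * α - α * a = 0)
    (haδ : a * δ - δ * a = -(p • (c * δ)))
    (hbα : b * α - α * b = -(p • (α * a)))
    (hbδ : b * δ - δ * b = -(p • (d * δ + c * α)))
    (hcα : c * α - α * c = c * δ)
    (hcδ : c * δ - δ * c = 0)
    (hdα : d * α - α * d = p • (δ * d - δ * a))
    (hdδ : d * δ - δ * d = -(p • (δ * c)))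
    (hαα : α * α = (p / 2) • (1 - a * a))
    (hαδ : α * δ + δ * α = p • (δ * δ - a * c))
    (hδδ : δ * δ = -((p / 2) • (c * c)))
    (hdet : a * d - b * c + α * δ = 1) :
    (1 + α * δ + (p / 2) • (a * c)) * (1 + α * δ + (p / 2) • (a * c))
      = 1 + (2 : ℂ) • (α * δ) + p • (a * c) - (p / 2) • (δ * δ) := by
  have zca := sub_eq_zero_of_eq hac
  have zAa := sub_eq_zero_of_eq haα
  have zDa := sub_eq_zero_of_eq haδ
  have zAc := sub_eq_zero_of_eq hcα
  have zDc := sub_eq_zero_of_eq hcδ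
  have zDA := sub_eq_zero_of_eq hαδ
  have zAA := sub_eq_zero_of_eq hαα
  have zDD := sub_eq_zero_of_eq hδδ
  have cert : (1 + α * δ + (p / 2) • (a * c)) * (1 + α * δ + (p / 2) • (a * c))
      - (1 + (2 : ℂ) • (α * δ) + p • (a * c) - (p / 2) • (δ * δ))
      = (((-1/4) * p^2 : ℂ)) • (a * (a * c - c * a - -(p • (c * c))) * c) +
      (((-1/2) * p : ℂ)) • (α * (a * δ - δ * a - -(p • (c * δ))) * c) +
      (((-1/2) * p : ℂ)) • ((a * α - α * a - 0) * δ * c) +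
      (((-1/2) * p : ℂ)) • (a * α * (c * δ - δ * c - 0)) +
      (((-1/2) * p : ℂ)) • (a * (c * α - α * c - c * δ) * δ) +
      (((-1/2) * p : ℂ)) • (a * c * (δ * δ - -((p / 2) • (c * c)))) +
      (((-1/2) * p^2 : ℂ)) • ((c * α - α * c - c * δ) * δ * c) +
      (((1) : ℂ)) • (α * (α * δ + δ * α - p • (δ * δ - a * c)) * δ) +
      (((1) * p : ℂ)) • ((a * α - α * a - 0) * c * δ) +
      (((1) * p : ℂ)) • (a * (c * α - α * c - c * δ) * δ) +
      (((1) * p : ℂ)) • (a * c * (δ * δ - -((p / 2) • (c * c)))) +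
      (((-1) : ℂ)) • ((α * α - (p / 2) • (1 - a * a)) * δ * δ) +
      (((1/2) * p : ℂ)) • (a * a * (δ * δ - -((p / 2) • (c * c)))) +
      (((1) * p : ℂ)) • (α * (δ * δ - -((p / 2) • (c * c))) * δ) +
      (((1/2) * p^2 : ℂ)) • ((c * α - α * c - c * δ) * c * δ) +
      (((1/2) * p^2 : ℂ)) • (c * (c * α - α * c - c * δ) * δ) +
      (((-1/2) * p^2 : ℂ)) • (c * α * (c * δ - δ * c - 0)) +
      (((-1/2) * p^2 : ℂ)) • (c * (c * α - α * c - c * δ) * δ) +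
      (((-1/2) * p^2 : ℂ)) • (c * (c * δ - δ * c - 0) * δ) +
      (((1/2) * p^2 : ℂ)) • (c * c * (δ * δ - -((p / 2) • (c * c)))) +
      (((-1/2) * p^2 : ℂ)) • (c * (δ * δ - -((p / 2) • (c * c))) * c) +
      (((-1/4) + (1/2) * p : ℂ)) • (δ * (α * δ + δ * α - p • (δ * δ - a * c)) * δ) +
      (((-1/4) * p + (1/2) * p^2 : ℂ)) • ((a * δ - δ * a - -(p • (c * δ))) * c * δ) +
      (((-1/4) * p + (1/2) * p^2 : ℂ)) • (a * (c * δ - δ * c - 0) * δ) +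
      (((-1/4) * p^2 + (1/2) * p^3 : ℂ)) • (c * (c * δ - δ * c - 0) * δ) +
      (((1/4) + (-1/2) * p : ℂ)) • ((α * δ + δ * α - p • (δ * δ - a * c)) * δ * δ) +
      (((-1/4) + (1/2) * p : ℂ)) • (α * (δ * δ - -((p / 2) • (c * c))) * δ) +
      (((-1/8) * p + (1/4) * p^2 : ℂ)) • ((c * α - α * c - c * δ) * c * δ) +
      (((-1/8) * p + (1/4) * p^2 : ℂ)) • (c * (c * α - α * c - c * δ) * δ) +
      (((1/8) * p + (-1/4) * p^2 : ℂ)) • (c * (c * δ - δ * c - 0) * δ) +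
      (((1/4) + (-1/2) * p : ℂ)) • ((δ * δ - -((p / 2) • (c * c))) * α * δ) +
      (((-1/4) * p + (3/4) * p^2 + (-1/2) * p^3 : ℂ)) • (c * c * (δ * δ - -((p / 2) • (c * c)))) +
      (((-1/4) * p : ℂ)) • (α * (c * α - α * c - c * δ) * c) +
      (((-1/4) * p : ℂ)) • ((c * α - α * c - c * δ) * α * c) +
      (((1/4) * p : ℂ)) • ((c * α - α * c - c * δ) * δ * c) +
      (((1/4) * p : ℂ)) • (c * (α * α - (p / 2) • (1 - a * a)) * c) +
      (((1/8) * p^2 : ℂ)) • ((a * c - c * a - -(p • (c * c))) * a * c) +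
      (((1/8) * p^2 : ℂ)) • (a * (a * c - c * a - -(p • (c * c))) * c) +
      (((1/8) * p^3 : ℂ)) • (c * (a * c - c * a - -(p • (c * c))) * c) +
      (((1/8) * p^3 : ℂ)) • ((a * c - c * a - -(p • (c * c))) * c * c) +
      (((-1/4) * p : ℂ)) • (c * (α * δ + δ * α - p • (δ * δ - a * c)) * c) +
      (((-1/4) * p^2 : ℂ)) • ((a * c - c * a - -(p • (c * c))) * c * c) +
      (((1/4) * p + (-1/4) * p^2 : ℂ)) • (c * (δ * δ - -((p / 2) • (c * c))) * c) +
      (((-1/4) * p : ℂ)) • ((α * α - (p / 2) • (1 - a * a)) * c * c) := by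
    simp only [smul_add, smul_sub, smul_smul, smul_neg, neg_mul, mul_neg, neg_neg,
      neg_smul, add_mul, mul_add, sub_mul, mul_sub, smul_mul_assoc, mul_smul_comm,
      mul_one, one_mul, mul_zero, zero_mul, sub_zero, mul_assoc]
    module
  rw [zca, zAa, zDa, zAc, zDc, zDA, zAA, zDD] at cert
  simp only [mul_zero, zero_mul, smul_zero, add_zero, zero_add] at cert
  exact sub_eq_zero.mp cert
end

section
/- In the supercommutative (p = 0) setting with constraints e = 1+αδ, γ = cα−aδ, β = dα−bδ, ad−bc+αδ = 1, the antipode matrix S(T) = ((d, −β, −b), (δ, e, −α), (−c, γ, a)) satisfies S(T)·T = T·S(T) = 1 as 3×3 supermatrices. -/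
open Matrix

set_option maxHeartbeats 1600000

/-- In the supercommutative (`p = 0`) limit, the antipode matrix
`S(T) = !![d, −β, −b; δ, e, −α; −c, γ, a]` is a two-sided inverse of
`T = !![a, α, b; γ, e, β; c, δ, d]`. -/
theorem classical_osp_antipode
    {R : Type*} [Ring R] (a b c d e α β γ δ : R)
    -- even elements commute with everything:
    (ha : ∀ x : R, a * x = x * a) (hb : ∀ x : R, b * x = x * b)
    (hc : ∀ x : R, c * x = x * c) (hd : ∀ x : R, d * x = x * d)
    (he : ∀ x : R, e * x = x * e)
    -- odd elements anticommute among themselves and square to zero: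
    (hαα : α * α = 0) (hββ : β * β = 0) (hγγ : γ * γ = 0) (hδδ : δ * δ = 0)
    (hαβ : α * β = -(β * α)) (hαγ : α * γ = -(γ * α)) (hαδ : α * δ = -(δ * α))
    (hβγ : β * γ = -(γ * β)) (hβδ : β * δ = -(δ * β)) (hγδ : γ * δ = -(δ * γ))
    -- constraints:
    (hce : e = 1 + α * δ) (hcγ : γ = c * α - a * δ) (hcβ : β = d * α - b * δ)
    (hdet : a * d - b * c + α * δ = 1) :
    !![d, -β, -b; δ, e, -α; -c, γ, a] * !![a, α, b; γ, e, β; c, δ, d] = 1 ∧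
    !![a, α, b; γ, e, β; c, δ, d] * !![d, -β, -b; δ, e, -α; -c, γ, a] = 1 := by
  subst hce hcγ hcβ
  have h1 : b * c = a * d + α * δ - 1 := by
    have := hdet; linear_combination (norm := noncomm_ring) -hdet
  have h1' : ∀ x : R, b * (c * x) = a * (d * x) + α * (δ * x) - x := by
    intro x; rw [← mul_assoc, h1]; noncomm_ring
  have ba : b * a = a * b := hb a
  have ba' : ∀ x : R, b * (a * x) = a * (b * x) := fun x => by
    rw [← mul_assoc, ba, mul_assoc]
  have ca : c * a = a * c := hc a
  have ca' : ∀ x : R, c * (a * x) = a * (c * x) := fun x => by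
    rw [← mul_assoc, ca, mul_assoc]
  have cb : c * b = b * c := hc b
  have cb' : ∀ x : R, c * (b * x) = b * (c * x) := fun x => by
    rw [← mul_assoc, cb, mul_assoc]
  have da : d * a = a * d := hd a
  have da' : ∀ x : R, d * (a * x) = a * (d * x) := fun x => by
    rw [← mul_assoc, da, mul_assoc]
  have db : d * b = b * d := hd b
  have db' : ∀ x : R, d * (b * x) = b * (d * x) := fun x => by
    rw [← mul_assoc, db, mul_assoc]
  have dc : d * c = c * d := hd c
  have dc' : ∀ x : R, d * (c * x) = c * (d * x) := fun x => by
    rw [← mul_assoc, dc, mul_assoc]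
  have αa : α * a = a * α := (ha α).symm
  have αa' : ∀ x : R, α * (a * x) = a * (α * x) := fun x => by
    rw [← mul_assoc, αa, mul_assoc]
  have αb : α * b = b * α := (hb α).symm
  have αb' : ∀ x : R, α * (b * x) = b * (α * x) := fun x => by
    rw [← mul_assoc, αb, mul_assoc]
  have αc : α * c = c * α := (hc α).symm
  have αc' : ∀ x : R, α * (c * x) = c * (α * x) := fun x => by
    rw [← mul_assoc, αc, mul_assoc]
  have αd : α * d = d * α := (hd α).symm
  have αd' : ∀ x : R, α * (d * x) = d * (α * x) := fun x => by
    rw [← mul_assoc, αd, mul_assoc]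
  have δa : δ * a = a * δ := (ha δ).symm
  have δa' : ∀ x : R, δ * (a * x) = a * (δ * x) := fun x => by
    rw [← mul_assoc, δa, mul_assoc]
  have δb : δ * b = b * δ := (hb δ).symm
  have δb' : ∀ x : R, δ * (b * x) = b * (δ * x) := fun x => by
    rw [← mul_assoc, δb, mul_assoc]
  have δc : δ * c = c * δ := (hc δ).symm
  have δc' : ∀ x : R, δ * (c * x) = c * (δ * x) := fun x => by
    rw [← mul_assoc, δc, mul_assoc]
  have δd : δ * d = d * δ := (hd δ).symm
  have δd' : ∀ x : R, δ * (d * x) = d * (δ * x) := fun x => by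
    rw [← mul_assoc, δd, mul_assoc]
  have δα : δ * α = -(α * δ) := by rw [hαδ, neg_neg]
  have δα' : ∀ x : R, δ * (α * x) = -(α * (δ * x)) := fun x => by
    rw [← mul_assoc, δα, neg_mul, mul_assoc]
  have αα' : ∀ x : R, α * (α * x) = 0 := fun x => by
    rw [← mul_assoc, hαα, zero_mul]
  have δδ' : ∀ x : R, δ * (δ * x) = 0 := fun x => by
    rw [← mul_assoc, hδδ, zero_mul]
  refine ⟨?_, ?_⟩ <;> rw [Matrix.one_fin_three] <;> ext i j <;> fin_cases i <;> fin_cases j <;>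
    · simp [Matrix.mul_apply, Fin.sum_univ_three, Matrix.vecHead, Matrix.vecTail]
      simp only [mul_add, add_mul, mul_sub, sub_mul, mul_neg, neg_mul, mul_one,
        one_mul, neg_neg, mul_assoc, h1, h1', ba, ba', ca, ca', cb, cb', da, da', db, db',
        dc, dc', αa, αa', αb, αb', αc, αc', αd, αd', δa, δa', δb, δb', δc, δc', δd, δd',
        δα, δα', αα', δδ', hαα, hδδ]
      first
      | noncomm_ring
      | abel
end
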